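/- Let (E_y)_{y∈Y} be positive semidefinite Hermitian d×d matrices with positive traces, Σ_y E_y = 1, and suppose λ_max(E_y) ≤ e^δ λ_min(E_y) with λ_min(E_y) > 0 for all y. Let H(A) = Σ_y (Tr[A E_y]/Tr[E_y]) E_y. Then the sum of the eigenvalues of H restricted to the orthogonal complement of the identity (i.e. Tr[H] − 1, where the trace is the super-operator trace on ℂ^{d×d}) is at most (e^δ − 1)². -/

import Mathlib

open Matrix BigOperators ComplexOrder

/-- The super-operator H(A) = Σ_y (Tr[A E_y]/Tr[E_y]) E_y. -/
noncomputable def superOpH {d : ℕ} {Y : Type*} [Fintype Y]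
    (E : Y → Matrix (Fin d) (Fin d) ℂ) (A : Matrix (Fin d) (Fin d) ℂ) :
    Matrix (Fin d) (Fin d) ℂ :=
  ∑ y, ((A * E y).trace / (E y).trace) • E y

/-- The super-operator trace of H, computed in the orthonormal basis of matrix
units for the Hilbert–Schmidt inner product. -/
noncomputable def superOpTrace {d : ℕ} {Y : Type*} [Fintype Y]
    (E : Y → Matrix (Fin d) (Fin d) ℂ) : ℂ :=
  ∑ i : Fin d, ∑ j : Fin d,
    ((Matrix.single i j (1 : ℂ))ᴴ *
      superOpH E (Matrix.single i j (1 : ℂ))).trace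

/-!
Expanding in matrix units gives `Tr H = Σ_y Tr[E_y²] / Tr[E_y]`. If the eigenvalues `μ_i` of
`E_y` lie in `[λ, e^δ λ]` with `λ = λ_min(E_y) ≥ 0`, then
`d Σ μ_i² - (Σ μ_i)² = d Σ (μ_i - λ)² - (Σ (μ_i - λ))² ≤ d² (e^δ - 1)² λ² ≤ (e^δ - 1)² Tr[E_y]²`,
the last step because `d λ ≤ Tr[E_y]`. Hence `Tr[E_y²] / Tr[E_y] ≤ (1 + (e^δ - 1)²) Tr[E_y] / d`,
and summing over `y` with `Σ_y Tr[E_y] = Tr 1 = d` gives `Tr H ≤ 1 + (e^δ - 1)²`.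
-/

theorem superOpTrace_eq_sum {d : ℕ} {Y : Type*} [Fintype Y] (E : Y → Matrix (Fin d) (Fin d) ℂ) :
    superOpTrace E = ∑ y, (E y * E y).trace / (E y).trace := by
  simp only [superOpTrace, superOpH, conjTranspose_single, star_one, Matrix.mul_sum, trace_sum,
    trace_single_mul, Matrix.smul_apply, smul_eq_mul, one_mul]
  conv_lhs => enter [2, i]; rw [Finset.sum_comm]
  rw [Finset.sum_comm]
  refine Finset.sum_congr rfl fun y _ => ?_
  simp only [trace, diag, mul_apply, Finset.sum_div]
  exact Finset.sum_congr rfl fun i _ => Finset.sum_congr rfl fun j _ => by ring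

section RealInequalities

variable {ι : Type*} [Fintype ι]

theorem card_mul_sum_sq_le_sq_sum_add (μ : ι → ℝ) {a b : ℝ} (h : ∀ i, a ≤ μ i ∧ μ i ≤ b) :
    (Fintype.card ι : ℝ) * ∑ i, μ i ^ 2 ≤
      (∑ i, μ i) ^ 2 + (Fintype.card ι : ℝ) ^ 2 * (b - a) ^ 2 := by
  set n : ℝ := ↑(Fintype.card ι)
  have hsq : ∑ i, (μ i - a) ^ 2 = ∑ i, μ i ^ 2 - 2 * a * ∑ i, μ i + n * a ^ 2 := by
    simp only [sub_sq, Finset.sum_add_distrib, Finset.sum_sub_distrib, ← Finset.mul_sum,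
      ← Finset.sum_mul, Finset.sum_const, Finset.card_univ, nsmul_eq_mul, n]
    ring
  have hdev : ∑ i, (μ i - a) ^ 2 ≤ n * (b - a) ^ 2 := by
    calc ∑ i, (μ i - a) ^ 2 ≤ ∑ _i : ι, (b - a) ^ 2 := Finset.sum_le_sum fun i _ =>
          pow_le_pow_left₀ (sub_nonneg.2 (h i).1) (by linarith [(h i).2]) 2
      _ = n * (b - a) ^ 2 := by simp [n]
  have hn : 0 ≤ n := Nat.cast_nonneg _
  nlinarith [sq_nonneg (∑ i, μ i - n * a), mul_le_mul_of_nonneg_left hdev hn]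

theorem card_mul_sum_sq_le_of_le_mul (μ : ι → ℝ) {c r : ℝ} (hc : 0 ≤ c)
    (h : ∀ i, c ≤ μ i ∧ μ i ≤ r * c) :
    (Fintype.card ι : ℝ) * ∑ i, μ i ^ 2 ≤ (1 + (r - 1) ^ 2) * (∑ i, μ i) ^ 2 := by
  have hlow : Fintype.card ι * c ≤ ∑ i, μ i := by
    simpa using Finset.sum_le_sum fun i (_ : i ∈ Finset.univ) => (h i).1
  calc (Fintype.card ι : ℝ) * ∑ i, μ i ^ 2
      ≤ (∑ i, μ i) ^ 2 + (Fintype.card ι : ℝ) ^ 2 * (r * c - c) ^ 2 :=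
        card_mul_sum_sq_le_sq_sum_add μ h
    _ = (∑ i, μ i) ^ 2 + (r - 1) ^ 2 * (Fintype.card ι * c) ^ 2 := by ring
    _ ≤ (∑ i, μ i) ^ 2 + (r - 1) ^ 2 * (∑ i, μ i) ^ 2 := by gcongr
    _ = (1 + (r - 1) ^ 2) * (∑ i, μ i) ^ 2 := by ring

theorem sum_sq_div_sum_le_of_le_mul (μ : ι → ℝ) {c r : ℝ} (hc : 0 ≤ c)
    (h : ∀ i, c ≤ μ i ∧ μ i ≤ r * c) :
    (∑ i, μ i ^ 2) / ∑ i, μ i ≤ (1 + (r - 1) ^ 2) * (∑ i, μ i) / Fintype.card ι := by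
  have hsum : 0 ≤ ∑ i, μ i := Finset.sum_nonneg fun i _ => hc.trans (h i).1
  rcases hsum.eq_or_lt with hzero | hpos
  · simp [← hzero]
  have hcard : (0 : ℝ) < Fintype.card ι := by
    exact_mod_cast Finset.card_pos.2 (Finset.nonempty_of_sum_ne_zero hpos.ne')
  rw [div_le_div_iff₀ hpos hcard]
  nlinarith [card_mul_sum_sq_le_of_le_mul μ hc h]

end RealInequalities

section Eigenvalues

variable {𝕜 n : Type*} [RCLike 𝕜] [Fintype n] [DecidableEq n]

theorem Matrix.IsHermitian.trace_pow_eq_sum_eigenvalues_pow {A : Matrix n n 𝕜}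
    (hA : A.IsHermitian) (k : ℕ) :
    (A ^ k).trace = ∑ i, (hA.eigenvalues i : 𝕜) ^ k := by
  conv_lhs => rw [hA.spectral_theorem, ← map_pow, Unitary.conjStarAlgAut_apply, trace_mul_cycle,
    Unitary.coe_star_mul_self, one_mul, diagonal_pow, trace_diagonal]
  rfl

theorem Matrix.PosSemidef.sum_sq_eigenvalues_div_sum_le {A : Matrix n n 𝕜} (hA : A.PosSemidef)
    {r : ℝ}
    (h : ⨆ i, hA.1.eigenvalues i ≤ r * ⨅ i, hA.1.eigenvalues i) :
    (∑ i, hA.1.eigenvalues i ^ 2) / ∑ i, hA.1.eigenvalues i ≤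
      (1 + (r - 1) ^ 2) * (∑ i, hA.1.eigenvalues i) / Fintype.card n :=
  sum_sq_div_sum_le_of_le_mul _ (Real.iInf_nonneg hA.eigenvalues_nonneg) fun i =>
    ⟨ciInf_le (Set.finite_range _).bddBelow i, (le_ciSup (Set.finite_range _).bddAbove i).trans h⟩

theorem Matrix.IsHermitian.sum_sum_eigenvalues_of_sum_eq_one {Y : Type*} [Fintype Y]
    {E : Y → Matrix n n 𝕜} (hE : ∀ y, (E y).IsHermitian) (hsum : ∑ y, E y = 1) :
    ∑ y, ∑ i, (hE y).eigenvalues i = Fintype.card n := by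
  have htrace := congrArg trace hsum
  simp only [trace_sum, trace_one, fun y => (hE y).trace_eq_sum_eigenvalues] at htrace
  exact_mod_cast htrace

end Eigenvalues

theorem re_superOpTrace_eq {d : ℕ} {Y : Type*} [Fintype Y] {E : Y → Matrix (Fin d) (Fin d) ℂ}
    (hE : ∀ y, (E y).IsHermitian) :
    (superOpTrace E).re = ∑ y, (∑ i, (hE y).eigenvalues i ^ 2) / ∑ i, (hE y).eigenvalues i := by
  rw [superOpTrace_eq_sum, Complex.re_sum]
  refine Finset.sum_congr rfl fun y _ => ?_
  rw [← sq, (hE y).trace_pow_eq_sum_eigenvalues_pow, (hE y).trace_eq_sum_eigenvalues]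
  norm_cast

theorem superOpH_trace_bound
    {d : ℕ} {Y : Type*} [Fintype Y]
    (E : Y → Matrix (Fin d) (Fin d) ℂ)
    (hpsd : ∀ y, (E y).PosSemidef)
    (hsum : ∑ y, E y = 1)
    (δ : ℝ)
    (hdp : ∀ y, (⨆ i, (hpsd y).1.eigenvalues i) ≤
        Real.exp δ * ⨅ i, (hpsd y).1.eigenvalues i) :
    (superOpTrace E).re - 1 ≤ (Real.exp δ - 1) ^ 2 := by
  have htotal := Matrix.IsHermitian.sum_sum_eigenvalues_of_sum_eq_one (fun y => (hpsd y).1) hsum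
  have hbound : (superOpTrace E).re ≤ 1 + (Real.exp δ - 1) ^ 2 := calc
    (superOpTrace E).re
        ≤ ∑ y, (1 + (Real.exp δ - 1) ^ 2) * (∑ i, (hpsd y).1.eigenvalues i) / d := by
          rw [re_superOpTrace_eq fun y => (hpsd y).1]
          refine Finset.sum_le_sum fun y _ => ?_
          simpa using (hpsd y).sum_sq_eigenvalues_div_sum_le (hdp y)
    _ = (1 + (Real.exp δ - 1) ^ 2) * (d / d) := by
          rw [← Finset.sum_div, ← Finset.mul_sum, htotal, Fintype.card_fin, mul_div_assoc]
    _ ≤ 1 + (Real.exp δ - 1) ^ 2 := mul_le_of_le_one_right (by positivity) (div_self_le_one _)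
  linarith
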